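/- arXiv:2302.00235 — 3 statements merged into one kernel-verified Lean document; each statement's English description precedes it below -/
import Mathlib

section
/- For any nonnegative function r : ℤ → ℝ with r(0) > 0 and finite positive sum, |med(r)| ≤ 2 W(r), where W(r) = ∑_{i∈ℤ} |i| min(1, r(i)/r(0)). -/
/-- For a nonnegative function `r : ℤ → ℝ` with `r 0 > 0` and finite positive
sum, any median `u` satisfies `|u| ≤ 2 * W r` where `W r = ∑_i |i| * min 1 (r i / r 0)`. -/
theorem median_abs_le_two_W (r : ℤ → ℝ) (hr : ∀ i, 0 ≤ r i) (hr0 : 0 < r 0)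
    (hsum : Summable r) (s : ℝ) (hs : s = ∑' i : ℤ, r i) (hspos : 0 < s)
    (hW : Summable fun i : ℤ => |(i : ℝ)| * min 1 (r i / r 0))
    (u : ℤ)
    (h1 : (∑' i : ℤ, if i ≤ u - 1 then r i else 0) < s / 2)
    (h2 : s / 2 ≤ ∑' i : ℤ, if i ≤ u then r i else 0) :
    |(u : ℝ)| ≤ 2 * ∑' i : ℤ, |(i : ℝ)| * min 1 (r i / r 0) := by
  have hles : ∀ i, r i ≤ s := fun i => hs ▸ Summable.le_tsum hsum i (fun j _ => hr j)
  have hmin_nonneg : ∀ i : ℤ, 0 ≤ min 1 (r i / r 0) :=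
    fun i => le_min zero_le_one (div_nonneg (hr i) hr0.le)
  have hmin_ge : ∀ i : ℤ, r i / s ≤ min 1 (r i / r 0) := by
    intro i
    refine le_min ?_ ?_
    · rw [div_le_one hspos]; exact hles i
    · exact div_le_div_of_nonneg_left (hr i) hr0 (hles 0)
  have hWnonneg : 0 ≤ ∑' i : ℤ, |(i : ℝ)| * min 1 (r i / r 0) :=
    tsum_nonneg fun i => mul_nonneg (abs_nonneg _) (hmin_nonneg i)
  -- summability of truncated sums
  have hsumA : Summable (fun i : ℤ => if i ≤ u - 1 then r i else 0) :=
    Summable.of_nonneg_of_le (fun i => by split_ifs; exacts [hr i, le_rfl])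
      (fun i => by split_ifs; exacts [le_rfl, hr i]) hsum
  have hsumB : Summable (fun i : ℤ => if u ≤ i then r i else 0) :=
    Summable.of_nonneg_of_le (fun i => by split_ifs; exacts [hr i, le_rfl])
      (fun i => by split_ifs; exacts [le_rfl, hr i]) hsum
  have hsplit : (∑' i : ℤ, if i ≤ u - 1 then r i else 0)
      + (∑' i : ℤ, if u ≤ i then r i else 0) = s := by
    rw [← Summable.tsum_add hsumA hsumB, hs]
    refine tsum_congr fun i => ?_
    by_cases h : u ≤ i
    · have : ¬ i ≤ u - 1 := by omega
      simp [h, this]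
    · have : i ≤ u - 1 := by omega
      simp [h, this]
  rcases lt_trichotomy u 0 with hu | hu | hu
  · -- u < 0 : use h2, for i ≤ u we have |i| ≥ -u
    have hsumA' : Summable (fun i : ℤ => if i ≤ u then r i else 0) :=
      Summable.of_nonneg_of_le (fun i => by split_ifs; exacts [hr i, le_rfl])
        (fun i => by split_ifs; exacts [le_rfl, hr i]) hsum
    have key : (-(u : ℝ) / s) * (∑' i : ℤ, if i ≤ u then r i else 0)
        ≤ ∑' i : ℤ, |(i : ℝ)| * min 1 (r i / r 0) := by
      rw [← tsum_mul_left]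
      refine Summable.tsum_le_tsum (fun i => ?_) (hsumA'.mul_left _) hW
      by_cases h : i ≤ u
      · simp only [h, if_true]
        have h1i : -(u : ℝ) ≤ |(i : ℝ)| := by
          rw [abs_of_nonpos (by exact_mod_cast (by omega : i ≤ 0) : (i:ℝ) ≤ 0)]
          exact_mod_cast (by omega : -u ≤ -i)
        calc -(u : ℝ) / s * r i = -(u : ℝ) * (r i / s) := by ring
          _ ≤ |(i : ℝ)| * min 1 (r i / r 0) := by
              apply mul_le_mul h1i (hmin_ge i) (div_nonneg (hr i) hspos.le) (abs_nonneg _)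
      · simp only [h, if_false, mul_zero]
        exact mul_nonneg (abs_nonneg _) (hmin_nonneg i)
    have h3 : -(u : ℝ) / s * (s / 2) ≤ -(u : ℝ) / s * ∑' i : ℤ, if i ≤ u then r i else 0 := by
      apply mul_le_mul_of_nonneg_left h2
      exact div_nonneg (neg_nonneg.mpr (by exact_mod_cast hu.le)) hspos.le
    have : -(u : ℝ) / s * (s / 2) = -(u : ℝ) / 2 := by field_simp
    rw [abs_of_neg (by exact_mod_cast hu : (u:ℝ) < 0)]
    nlinarith [key, h3]
  · simp [hu]; exact hWnonneg
  · -- u > 0 : use h1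
    have hB : s / 2 < ∑' i : ℤ, if u ≤ i then r i else 0 := by linarith
    have key : ((u : ℝ) / s) * (∑' i : ℤ, if u ≤ i then r i else 0)
        ≤ ∑' i : ℤ, |(i : ℝ)| * min 1 (r i / r 0) := by
      rw [← tsum_mul_left]
      refine Summable.tsum_le_tsum (fun i => ?_) (hsumB.mul_left _) hW
      by_cases h : u ≤ i
      · simp only [h, if_true]
        have h1i : (u : ℝ) ≤ |(i : ℝ)| := by
          rw [abs_of_nonneg (by exact_mod_cast (by omega : (0:ℤ) ≤ i) : (0:ℝ) ≤ (i:ℝ))]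
          exact_mod_cast h
        calc (u : ℝ) / s * r i = (u : ℝ) * (r i / s) := by ring
          _ ≤ |(i : ℝ)| * min 1 (r i / r 0) := by
              apply mul_le_mul h1i (hmin_ge i) (div_nonneg (hr i) hspos.le) (abs_nonneg _)
      · simp only [h, if_false, mul_zero]
        exact mul_nonneg (abs_nonneg _) (hmin_nonneg i)
    have h3 : (u : ℝ) / s * (s / 2) ≤ (u : ℝ) / s * ∑' i : ℤ, if u ≤ i then r i else 0 := by
      apply mul_le_mul_of_nonneg_left hB.le
      positivity
    have : (u : ℝ) / s * (s / 2) = (u : ℝ) / 2 := by field_simp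
    rw [abs_of_pos (by exact_mod_cast hu : (0:ℝ) < (u:ℝ))]
    nlinarith [key, h3]
end

section
/- Let Δ₀ > 0, let Δ be a real random variable with no point mass at 0, independent of two i.i.d. sequences (Z⁺(u)), (Z⁻(u)) of standard normals. Define S⁺(i) = ∑_{u=1}^i Z⁺(u), S⁻(i) = ∑_{u=1}^i Z⁻(u), and p : ℤ → ℝ by p(i) = exp(Δ S⁺(i) − iΔ²/2) for i > 0, p(−i) = exp(Δ S⁻(i) − iΔ²/2) for i > 0, and p(0) = 1. Then E[W(p) · 1_{|Δ| ≥ Δ₀}] ≤ 4 ∑_{i=1}^∞ i Φ(−√i Δ₀/2) < ∞, where W(p) = ∑_{i∈ℤ} |i| min(1, p(i)). -/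
/-!
Fix `i ≥ 1` and condition on `Δ = δ`. The partial sum `S(i)` is `N(0, i)` and independent of `Δ`,
so `δ S(i) - i δ² / 2 = Y - v / 2` with `Y ~ N(0, v)`, `v = i δ²`. Splitting at `Y = v / 2`, and
using that `e^{y - v/2}` tilts the density of `N(0, v)` into that of `N(v, v)` below that point,
gives `E[min(1, e^{Y - v/2})] = 2 Φ(-√v / 2) ≤ 2 Φ(-√i Δ₀ / 2)` on `{|δ| ≥ Δ₀}`. Monotone
convergence sums this over `i ∈ ℤ`, and the Chernoff bound `Φ(-x) ≤ e^{-x²/2}` dominates the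
series by `∑ i e^{-i Δ₀² / 8}`.
-/

open MeasureTheory ProbabilityTheory

/-- Standard normal distribution function `Φ`. -/
noncomputable def stdCDF (z : ℝ) : ℝ :=
  ∫ x in Set.Iic z, (Real.sqrt (2 * Real.pi))⁻¹ * Real.exp (-x ^ 2 / 2)

open Real Set
open scoped NNReal ENNReal

lemma stdCDF_nonneg (z : ℝ) : 0 ≤ stdCDF z :=
  setIntegral_nonneg measurableSet_Iic fun _ _ => by positivity

lemma gaussianReal_zero_one_Iic (z : ℝ) :
    gaussianReal 0 1 (Iic z) = ENNReal.ofReal (stdCDF z) := by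
  rw [gaussianReal_apply_eq_integral 0 one_ne_zero]
  simp [stdCDF, gaussianPDFReal]

lemma stdCDF_mono : Monotone stdCDF := fun a b hab => by
  have h := measure_mono (μ := gaussianReal 0 1) (Iic_subset_Iic.mpr hab)
  rwa [gaussianReal_zero_one_Iic, gaussianReal_zero_one_Iic,
    ENNReal.ofReal_le_ofReal_iff (stdCDF_nonneg b)] at h

lemma gaussianReal_Iic {v : ℝ≥0} (hv : v ≠ 0) (a : ℝ) :
    gaussianReal 0 v (Iic a) = ENNReal.ofReal (stdCDF (a / √v)) := by
  have hsqrt : 0 < √(v : ℝ) := Real.sqrt_pos.mpr (by positivity)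
  have hmap : (gaussianReal 0 1).map (√(v : ℝ) * ·) = gaussianReal 0 v := by
    rw [gaussianReal_map_const_mul, mul_zero]
    congr
    ext
    simp [Real.sq_sqrt v.coe_nonneg]
  rw [← hmap, Measure.map_apply (measurable_const_mul _) measurableSet_Iic,
    ← gaussianReal_zero_one_Iic]
  congr 1
  ext x
  simp [le_div_iff₀' hsqrt]

lemma stdCDF_neg_le_exp {x : ℝ} (hx : 0 ≤ x) : stdCDF (-x) ≤ exp (-x ^ 2 / 2) := by
  have hchernoff := measure_le_le_exp_mul_mgf (μ := gaussianReal 0 1) (X := id) (t := -x) (-x)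
    (neg_nonpos.mpr hx) (integrable_exp_mul_gaussianReal _)
  rw [mgf_id_gaussianReal, ← exp_add] at hchernoff
  have hIic : (gaussianReal 0 1).real {y | id y ≤ -x} = stdCDF (-x) := by
    change (gaussianReal 0 1).real (Iic (-x)) = _
    rw [measureReal_def, gaussianReal_zero_one_Iic, ENNReal.toReal_ofReal (stdCDF_nonneg _)]
  convert hchernoff using 2
  · exact hIic.symm
  · push_cast; ring

lemma summable_succ_mul_stdCDF {Δ₀ : ℝ} (hΔ₀ : 0 < Δ₀) :
    Summable (fun i : ℕ => ((i : ℝ) + 1) * stdCDF (-(√((i : ℝ) + 1) * Δ₀) / 2)) := by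
  set r := exp (-Δ₀ ^ 2 / 8)
  have hr : ‖r‖ < 1 := by
    rw [Real.norm_of_nonneg (exp_pos _).le, Real.exp_lt_one_iff]
    nlinarith
  have hgeom : Summable (fun i : ℕ => ((i : ℝ) + 1) * r ^ (i + 1)) := by
    refine ((summable_nat_add_iff (f := fun i : ℕ => (i : ℝ) ^ 1 * r ^ i) 1).mpr
      (summable_pow_mul_geometric_of_norm_lt_one 1 hr)).congr fun i => ?_
    push_cast
    ring
  refine hgeom.of_nonneg_of_le (fun i => mul_nonneg (by positivity) (stdCDF_nonneg _))
    fun i => mul_le_mul_of_nonneg_left ?_ (by positivity)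
  calc stdCDF (-(√((i : ℝ) + 1) * Δ₀) / 2)
      = stdCDF (-(√((i : ℝ) + 1) * Δ₀ / 2)) := by rw [neg_div]
    _ ≤ exp (-(√((i : ℝ) + 1) * Δ₀ / 2) ^ 2 / 2) := stdCDF_neg_le_exp (by positivity)
    _ = r ^ (i + 1) := by
      rw [← exp_nat_mul, div_pow, mul_pow, Real.sq_sqrt (by positivity)]
      push_cast
      ring_nf

lemma gaussianReal_Ici (v : ℝ≥0) (a : ℝ) :
    gaussianReal 0 v (Ici a) = gaussianReal 0 v (Iic (-a)) := by
  have hsymm := gaussianReal_map_neg (μ := 0) (v := v)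
  rw [neg_zero] at hsymm
  rw [← hsymm, Measure.map_apply measurable_neg measurableSet_Iic]
  congr 1
  ext
  simp

lemma gaussianPDFReal_mul_exp_sub_half {v : ℝ≥0} (hv : v ≠ 0) (y : ℝ) :
    gaussianPDFReal 0 v y * exp (y - v / 2) = gaussianPDFReal v v y := by
  have hv' : (v : ℝ) ≠ 0 := by exact_mod_cast hv
  simp only [gaussianPDFReal]
  rw [mul_assoc, ← exp_add]
  congr 2
  field_simp
  ring

lemma lintegral_min_one_exp_sub_half_gaussianReal {v : ℝ≥0} (hv : v ≠ 0) :
    ∫⁻ y, ENNReal.ofReal (min 1 (exp (y - v / 2))) ∂gaussianReal 0 v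
      = ENNReal.ofReal (2 * stdCDF (-√v / 2)) := by
  have htail : gaussianReal 0 v (Iic (-(v / 2))) = ENNReal.ofReal (stdCDF (-√v / 2)) := by
    rw [gaussianReal_Iic hv]
    congr 2
    have hsqrt : 0 < √(v : ℝ) := Real.sqrt_pos.mpr (by positivity)
    field_simp
    rw [Real.sq_sqrt v.coe_nonneg]
  have hupper : ∫⁻ y in Ici (v / 2 : ℝ), ENNReal.ofReal (min 1 (exp (y - v / 2))) ∂gaussianReal 0 v
      = gaussianReal 0 v (Iic (-(v / 2))) := by
    rw [← gaussianReal_Ici, ← setLIntegral_one]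
    refine setLIntegral_congr_fun measurableSet_Ici fun y hy => ?_
    rw [min_eq_left (one_le_exp (sub_nonneg.mpr hy)), ENNReal.ofReal_one]
  have hlower : ∫⁻ y in Iio (v / 2 : ℝ), ENNReal.ofReal (min 1 (exp (y - v / 2))) ∂gaussianReal 0 v
      = gaussianReal 0 v (Iic (-(v / 2))) := by
    have := nullSingletonClass_gaussianReal (μ := 0) hv
    have hshift := gaussianReal_map_add_const (μ := 0) (v := v) v
    rw [zero_add] at hshift
    calc ∫⁻ y in Iio (v / 2 : ℝ), ENNReal.ofReal (min 1 (exp (y - v / 2))) ∂gaussianReal 0 v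
        = ∫⁻ y in Iio (v / 2 : ℝ), gaussianPDF v v y := by
          rw [gaussianReal_of_var_ne_zero 0 hv, setLIntegral_withDensity_eq_setLIntegral_mul _
            (measurable_gaussianPDF 0 v) (by fun_prop) measurableSet_Iio]
          refine setLIntegral_congr_fun measurableSet_Iio fun y hy => ?_
          have hexp : exp (y - v / 2) ≤ 1 := exp_le_one_iff.mpr (by linarith [hy.out])
          rw [Pi.mul_apply, min_eq_right hexp, gaussianPDF, gaussianPDF,
            ← ENNReal.ofReal_mul (gaussianPDFReal_nonneg _ _ _),
            gaussianPDFReal_mul_exp_sub_half hv]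
      _ = gaussianReal v v (Iio (v / 2)) := (gaussianReal_apply _ hv _).symm
      _ = gaussianReal 0 v (Iio (-(v / 2))) := by
          rw [← hshift, Measure.map_apply (measurable_add_const _) measurableSet_Iio]
          congr 1
          ext
          simp only [mem_preimage, mem_Iio]
          constructor <;> intro h <;> linarith
      _ = gaussianReal 0 v (Iic (-(v / 2))) := measure_congr Iio_ae_eq_Iic
  rw [← lintegral_add_compl _ measurableSet_Ici, compl_Ici, hupper, hlower, htail,
    ← ENNReal.ofReal_add (stdCDF_nonneg _) (stdCDF_nonneg _), two_mul]

lemma lintegral_min_one_exp_mul_sub_le {v : ℝ≥0} (hv : v ≠ 0) {Δ₀ δ : ℝ} (hΔ₀ : 0 < Δ₀)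
    (hδ : Δ₀ ≤ |δ|) :
    ∫⁻ s, ENNReal.ofReal (min 1 (exp (δ * s - v * δ ^ 2 / 2))) ∂gaussianReal 0 v
      ≤ ENNReal.ofReal (2 * stdCDF (-(√v * Δ₀) / 2)) := by
  set w : ℝ≥0 := ⟨δ ^ 2, sq_nonneg δ⟩ * v
  have hw_coe : (w : ℝ) = δ ^ 2 * v := rfl
  have hw : w ≠ 0 := NNReal.coe_ne_zero.mp <| by
    rw [hw_coe]
    exact mul_ne_zero (pow_ne_zero 2 (abs_pos.mp (hΔ₀.trans_le hδ))) (NNReal.coe_ne_zero.mpr hv)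
  have hsqrt : √(w : ℝ) = |δ| * √v := by
    rw [hw_coe, Real.sqrt_mul (sq_nonneg δ), Real.sqrt_sq_eq_abs]
  have hmap : (gaussianReal 0 v).map (δ * ·) = gaussianReal 0 w := by
    rw [gaussianReal_map_const_mul, mul_zero]
    rfl
  calc ∫⁻ s, ENNReal.ofReal (min 1 (exp (δ * s - v * δ ^ 2 / 2))) ∂gaussianReal 0 v
      = ∫⁻ y, ENNReal.ofReal (min 1 (exp (y - w / 2))) ∂gaussianReal 0 w := by
        rw [← hmap, lintegral_map (by fun_prop) (by fun_prop)]
        refine lintegral_congr fun s => ?_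
        rw [hw_coe]
        ring_nf
    _ = ENNReal.ofReal (2 * stdCDF (-√w / 2)) := lintegral_min_one_exp_sub_half_gaussianReal hw
    _ ≤ ENNReal.ofReal (2 * stdCDF (-(√v * Δ₀) / 2)) := by
        gcongr
        apply stdCDF_mono
        rw [hsqrt]
        have := mul_le_mul_of_nonneg_right hδ (Real.sqrt_nonneg (v : ℝ))
        linarith

namespace ProbabilityTheory

variable {Ω ι : Type*} [MeasurableSpace Ω] {P : Measure Ω} {X : ι → Ω → ℝ} {e : ℕ → ι}

lemma IndepFun.setLIntegral_min_one_exp_le [IsProbabilityMeasure P] {D S : Ω → ℝ}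
    (hD : Measurable D) (hS : Measurable S)
    (hDS : IndepFun D S P) {v : ℝ≥0} (hv : v ≠ 0) (hlaw : P.map S = gaussianReal 0 v)
    {Δ₀ : ℝ} (hΔ₀ : 0 < Δ₀) :
    ∫⁻ ω in {ω | Δ₀ ≤ |D ω|}, ENNReal.ofReal (min 1 (exp (D ω * S ω - v * D ω ^ 2 / 2))) ∂P
      ≤ ENNReal.ofReal (2 * stdCDF (-(√v * Δ₀) / 2)) := by
  set g : ℝ × ℝ → ℝ≥0∞ := {p | Δ₀ ≤ |p.1|}.indicator
    fun p => ENNReal.ofReal (min 1 (exp (p.1 * p.2 - v * p.1 ^ 2 / 2)))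
  have hg : Measurable g :=
    (by fun_prop : Measurable _).indicator (measurableSet_le measurable_const measurable_fst.abs)
  have hjoint : P.map (fun ω => (D ω, S ω)) = (P.map D).prod (gaussianReal 0 v) := by
    rw [← hlaw]
    exact (indepFun_iff_map_prod_eq_prod_map_map hD.aemeasurable hS.aemeasurable).mp hDS
  have := Measure.isProbabilityMeasure_map (μ := P) hD.aemeasurable
  calc ∫⁻ ω in {ω | Δ₀ ≤ |D ω|}, ENNReal.ofReal (min 1 (exp (D ω * S ω - v * D ω ^ 2 / 2))) ∂P
      = ∫⁻ ω, g (D ω, S ω) ∂P := by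
        rw [← lintegral_indicator (measurableSet_le measurable_const hD.abs)]
        rfl
    _ = ∫⁻ δ, ∫⁻ s, g (δ, s) ∂gaussianReal 0 v ∂P.map D := by
        rw [← lintegral_map hg (hD.prodMk hS), hjoint, lintegral_prod _ hg.aemeasurable]
    _ ≤ ∫⁻ _, ENNReal.ofReal (2 * stdCDF (-(√v * Δ₀) / 2)) ∂P.map D := by
        refine lintegral_mono fun δ => ?_
        by_cases hδ : Δ₀ ≤ |δ|
        · simpa [g, indicator, hδ] using lintegral_min_one_exp_mul_sub_le hv hΔ₀ hδ
        · simp [g, hδ]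
    _ = ENNReal.ofReal (2 * stdCDF (-(√v * Δ₀) / 2)) := by simp

lemma iIndepFun.indepFun_sum_range (hX : iIndepFun X P) (hXm : ∀ i, Measurable (X i))
    (he : e.Injective) {n : ℕ} {j : ι} (hj : ∀ u < n, e u ≠ j) :
    IndepFun (fun ω => ∑ u ∈ Finset.range n, X (e u) ω) (X j) P := by
  have hnot : j ∉ (Finset.range n).map ⟨e, he⟩ := by simpa using hj
  convert hX.indepFun_finsetSum_of_notMem hXm hnot using 1
  ext ω
  simp

lemma iIndepFun.map_sum_range_eq_gaussianReal (hX : iIndepFun X P) (hXm : ∀ i, Measurable (X i))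
    (he : e.Injective) (hlaw : ∀ u, P.map (X (e u)) = gaussianReal 0 1) (n : ℕ) :
    P.map (fun ω => ∑ u ∈ Finset.range n, X (e u) ω) = gaussianReal 0 n := by
  have := hX.isProbabilityMeasure
  induction n with
  | zero => simp [gaussianReal_zero_var]
  | succ n ih =>
    have hadd := gaussianReal_add_gaussianReal_of_indepFun
      (hX.indepFun_sum_range hXm he fun u hu => he.ne hu.ne) ih (hlaw n)
    simp_rw [Finset.sum_range_succ]
    simpa [Pi.add_def] using hadd

lemma iIndepFun.setLIntegral_mul_min_one_exp_sum_le (hX : iIndepFun X P)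
    (hXm : ∀ i, Measurable (X i)) (he : e.Injective) {j : ι} (hj : ∀ u, e u ≠ j)
    (hlaw : ∀ u, P.map (X (e u)) = gaussianReal 0 1) {Δ₀ : ℝ} (hΔ₀ : 0 < Δ₀) (n : ℕ) :
    ∫⁻ ω in {ω | Δ₀ ≤ |X j ω|}, ENNReal.ofReal
        (n * min 1 (exp (X j ω * ∑ u ∈ Finset.range n, X (e u) ω - n * X j ω ^ 2 / 2))) ∂P
      ≤ ENNReal.ofReal (2 * (n * stdCDF (-(√n * Δ₀) / 2))) := by
  have := hX.isProbabilityMeasure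
  rcases eq_or_ne n 0 with rfl | hn
  · simp
  have hbound := IndepFun.setLIntegral_min_one_exp_le (hXm j) (by fun_prop)
    (hX.indepFun_sum_range hXm he fun u _ => hj u).symm (Nat.cast_ne_zero.mpr hn)
    (hX.map_sum_range_eq_gaussianReal hXm he hlaw n) hΔ₀
  simp only [NNReal.coe_natCast] at hbound
  simp_rw [ENNReal.ofReal_mul (Nat.cast_nonneg n)]
  rw [lintegral_const_mul' _ _ ENNReal.ofReal_ne_top, mul_left_comm,
    ENNReal.ofReal_mul (Nat.cast_nonneg n)]
  gcongr

end ProbabilityTheory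

lemma integral_le_of_lintegral_ofReal_le {α : Type*} [MeasurableSpace α] {μ : Measure α}
    {f : α → ℝ} (hf : 0 ≤ f) {c : ℝ} (hc : 0 ≤ c)
    (h : ∫⁻ x, ENNReal.ofReal (f x) ∂μ ≤ ENNReal.ofReal c) : ∫ x, f x ∂μ ≤ c := by
  by_cases hint : Integrable f μ
  · rw [integral_eq_lintegral_of_nonneg_ae (.of_forall hf) hint.1]
    exact ENNReal.toReal_le_of_le_ofReal hc h
  · rwa [integral_undef hint]

lemma integral_tsum_int_le_two_mul_tsum {α : Type*} [MeasurableSpace α] {μ : Measure α}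
    {f : ℤ → α → ℝ}
    (hf : ∀ i, Measurable (f i)) (hf0 : ∀ i x, 0 ≤ f i x) (hzero : ∀ x, f 0 x = 0)
    {a : ℕ → ℝ} (ha0 : ∀ n, 0 ≤ a n) (ha : Summable a)
    (hpos : ∀ n : ℕ, ∫⁻ x, ENNReal.ofReal (f (n + 1) x) ∂μ ≤ ENNReal.ofReal (a n))
    (hneg : ∀ n : ℕ, ∫⁻ x, ENNReal.ofReal (f (-(n + 1)) x) ∂μ ≤ ENNReal.ofReal (a n)) :
    ∫ x, ∑' i, f i x ∂μ ≤ 2 * ∑' n, a n := by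
  have hsum0 : 0 ≤ ∑' n, a n := tsum_nonneg ha0
  refine integral_le_of_lintegral_ofReal_le (fun x => tsum_nonneg (hf0 · x)) (by positivity) ?_
  have hofReal_tsum : ∀ x, ENNReal.ofReal (∑' i, f i x) ≤ ∑' i, ENNReal.ofReal (f i x) := by
    intro x
    by_cases hx : Summable (f · x)
    · rw [ENNReal.ofReal_tsum_of_nonneg (hf0 · x) hx]
    · simp [tsum_eq_zero_of_not_summable hx]
  calc ∫⁻ x, ENNReal.ofReal (∑' i, f i x) ∂μ
      ≤ ∫⁻ x, ∑' i, ENNReal.ofReal (f i x) ∂μ := lintegral_mono hofReal_tsum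
    _ = ∑' i, ∫⁻ x, ENNReal.ofReal (f i x) ∂μ :=
        lintegral_tsum fun i => (hf i).ennreal_ofReal.aemeasurable
    _ = (∑' n : ℕ, ∫⁻ x, ENNReal.ofReal (f (n + 1) x) ∂μ) + ∫⁻ x, ENNReal.ofReal (f 0 x) ∂μ
          + ∑' n : ℕ, ∫⁻ x, ENNReal.ofReal (f (-(n + 1)) x) ∂μ :=
        tsum_of_add_one_of_neg_add_one ENNReal.summable ENNReal.summable
    _ ≤ (∑' n, ENNReal.ofReal (a n)) + 0 + ∑' n, ENNReal.ofReal (a n) := by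
        gcongr with n n
        · exact hpos n
        · simp [hzero]
        · exact hneg n
    _ = ENNReal.ofReal (2 * ∑' n, a n) := by
        rw [← ENNReal.ofReal_tsum_of_nonneg ha0 ha, add_zero, ← ENNReal.ofReal_add hsum0 hsum0,
          two_mul]

theorem expected_W_le_general {Ω : Type*} [MeasurableSpace Ω]
    (P : Measure Ω)
    (D : Ω → ℝ) (Zp Zm : ℕ → Ω → ℝ)
    (hDmeas : Measurable D) (hZpmeas : ∀ u, Measurable (Zp u))
    (hZmmeas : ∀ u, Measurable (Zm u))
    (hindep : iIndepFun
      (Sum.elim Zp (Sum.elim Zm (fun _ : Unit => D))) P)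
    (hdistp : ∀ u, P.map (Zp u) = gaussianReal 0 1)
    (hdistm : ∀ u, P.map (Zm u) = gaussianReal 0 1)
    (Δ₀ : ℝ) (hΔ₀ : 0 < Δ₀) :
    (∫ ω in {ω | Δ₀ ≤ |D ω|},
        (∑' i : ℤ, |(i : ℝ)| * min 1
          (if 0 < i then
            Real.exp (D ω * (∑ u ∈ Finset.range i.toNat, Zp u ω) - (i : ℝ) * (D ω) ^ 2 / 2)
          else if i < 0 then
            Real.exp (D ω * (∑ u ∈ Finset.range (-i).toNat, Zm u ω) - (-i : ℝ) * (D ω) ^ 2 / 2)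
          else 1)) ∂P)
      ≤ 4 * ∑' i : ℕ, ((i : ℝ) + 1) * stdCDF (-(Real.sqrt ((i : ℝ) + 1) * Δ₀) / 2) ∧
    Summable (fun i : ℕ => ((i : ℝ) + 1) * stdCDF (-(Real.sqrt ((i : ℝ) + 1) * Δ₀) / 2)) := by
  have hsum := summable_succ_mul_stdCDF hΔ₀
  refine ⟨?_, hsum⟩
  have hXm : ∀ i, Measurable (Sum.elim Zp (Sum.elim Zm fun _ : Unit => D) i) := by
    rintro (u | u | u) <;> simp [*]
  have hplus := hindep.setLIntegral_mul_min_one_exp_sum_le hXm Sum.inl_injective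
    (j := .inr (.inr ())) (by simp) hdistp hΔ₀
  have hminus := hindep.setLIntegral_mul_min_one_exp_sum_le hXm
    (e := fun u : ℕ => (.inr (.inl u) : ℕ ⊕ (ℕ ⊕ Unit))) (fun a b h => by simpa using h)
    (j := .inr (.inr ())) (by simp) hdistm hΔ₀
  have hA : MeasurableSet {ω | Δ₀ ≤ |D ω|} := measurableSet_le measurable_const hDmeas.abs
  calc _ ≤ 2 * ∑' n : ℕ, 2 * (((n : ℝ) + 1) * stdCDF (-(√((n : ℝ) + 1) * Δ₀) / 2)) := by
        refine integral_tsum_int_le_two_mul_tsum (fun i => ?_) (fun i ω => ?_) (fun ω => by simp)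
          (fun n => by have := stdCDF_nonneg (-(√((n : ℝ) + 1) * Δ₀) / 2); positivity)
          (hsum.mul_left 2) (fun n => ?_) (fun n => ?_)
        · split_ifs <;> fun_prop
        · exact mul_nonneg (abs_nonneg _) (le_min zero_le_one (by split_ifs <;> positivity))
        · refine (setLIntegral_congr_fun hA fun ω _ => ?_).trans_le
            ((hplus (n + 1)).trans_eq (by push_cast; rfl))
          simp only [if_pos (by positivity : (0 : ℤ) < n + 1)]
          push_cast
          rw [abs_of_pos (by positivity)]
          rfl
        · refine (setLIntegral_congr_fun hA fun ω _ => ?_).trans_le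
            ((hminus (n + 1)).trans_eq (by push_cast; rfl))
          simp only [if_neg (by omega : ¬ (0 : ℤ) < -(n + 1)),
            if_pos (by omega : -((n : ℤ) + 1) < 0), neg_neg]
          push_cast
          rw [neg_neg, abs_neg, abs_of_pos (by positivity)]
          rfl
    _ = _ := by rw [tsum_mul_left]; ring

/-- With `Δ = D` a random variable with no atom at `0`, independent of two
i.i.d. standard normal sequences `Zp, Zm` with partial sums `S⁺, S⁻`, and `p : ℤ → ℝ`
the two-sided likelihood profile, `E[W(p) 1_{|D| ≥ Δ₀}] ≤ 4 ∑_{i ≥ 1} i Φ(−√i Δ₀/2) < ∞`,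
where `W(p) = ∑_{i ∈ ℤ} |i| min(1, p i)`. -/
theorem expected_W_le {Ω : Type*} [MeasurableSpace Ω]
    (P : Measure Ω) [IsProbabilityMeasure P]
    (D : Ω → ℝ) (Zp Zm : ℕ → Ω → ℝ)
    (hDmeas : Measurable D) (hZpmeas : ∀ u, Measurable (Zp u))
    (hZmmeas : ∀ u, Measurable (Zm u))
    (hindep : iIndepFun
      (Sum.elim Zp (Sum.elim Zm (fun _ : Unit => D))) P)
    (hdistp : ∀ u, P.map (Zp u) = gaussianReal 0 1)
    (hdistm : ∀ u, P.map (Zm u) = gaussianReal 0 1)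
    (hnoatom : P {ω | D ω = 0} = 0)
    (Δ₀ : ℝ) (hΔ₀ : 0 < Δ₀) :
    (∫ ω in {ω | Δ₀ ≤ |D ω|},
        (∑' i : ℤ, |(i : ℝ)| * min 1
          (if 0 < i then
            Real.exp (D ω * (∑ u ∈ Finset.range i.toNat, Zp u ω) - (i : ℝ) * (D ω) ^ 2 / 2)
          else if i < 0 then
            Real.exp (D ω * (∑ u ∈ Finset.range (-i).toNat, Zm u ω) - (-i : ℝ) * (D ω) ^ 2 / 2)
          else 1)) ∂P)
      ≤ 4 * ∑' i : ℕ, ((i : ℝ) + 1) * stdCDF (-(Real.sqrt ((i : ℝ) + 1) * Δ₀) / 2) ∧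
    Summable (fun i : ℕ => ((i : ℝ) + 1) * stdCDF (-(Real.sqrt ((i : ℝ) + 1) * Δ₀) / 2)) :=
  expected_W_le_general P D Zp Zm hDmeas hZpmeas hZmmeas hindep hdistp hdistm Δ₀ hΔ₀
end

section
/- With the setup of the previous bound, for every positive integer i one also has q^{−1} E[a₀ · 1_{a₀ ≤ 2 a⁺(i) p(i)}] ≤ 3 q^{−1} E[min(a₀, a⁺(i))], where the right side uses that a₀ and a⁺(i) are i.i.d. G_q and p(i) is independent of them with E[p(i)] = 1. -/
/-!
On the event `a₀ ≤ 2 a⁺ p` one has `a₀ ≤ min(a₀, a⁺) (1 + 2p)`: if `a⁺ < a₀` then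
`a₀ ≤ 2 a⁺ p ≤ a⁺ (1 + 2p)`. Off the event the right side is still nonnegative, so by the
independence of `min(a₀, a⁺)` and `p` the expectation is at most `E[min(a₀, a⁺)] (1 + 2 E p)`.
Finally `E p = 1` because `p(i)` is the exponential martingale of a Gaussian random walk, whose
mean is read off the Gaussian moment generating function.
-/

open MeasureTheory ProbabilityTheory Real
open scoped NNReal

theorem ProbabilityTheory.iIndepFun.indepFun_of_measurable_iSup {Ω ι β γ δ : Type*}
    {mΩ : MeasurableSpace Ω} [mβ : MeasurableSpace β] [MeasurableSpace γ]
    [MeasurableSpace δ] {μ : Measure Ω} {f : ι → Ω → β} (hf : iIndepFun f μ)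
    (hf_meas : ∀ i, Measurable (f i)) {S T : Set ι} (hST : Disjoint S T) {X : Ω → γ} {Y : Ω → δ}
    (hX : Measurable[⨆ i ∈ S, mβ.comap (f i)] X) (hY : Measurable[⨆ i ∈ T, mβ.comap (f i)] Y) :
    IndepFun X Y μ := by
  rw [IndepFun_iff_Indep]
  have := indep_iSup_of_disjoint (fun i => (hf_meas i).comap_le) hf.iIndep hST
  exact indep_of_indep_of_le_right (indep_of_indep_of_le_left this hX.comap_le) hY.comap_le

theorem measurable_iSup_comap_of_mem {Ω ι β : Type*} [mβ : MeasurableSpace β] {f : ι → Ω → β}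
    {S : Set ι} {j : ι} (hj : j ∈ S) : Measurable[⨆ i ∈ S, mβ.comap (f i)] (f j) :=
  (comap_measurable (f j)).mono (le_iSup₂ (f := fun i (_ : i ∈ S) => mβ.comap (f i)) j hj) le_rfl

theorem le_min_mul_one_add_two_mul {a b p : ℝ} (ha : 0 ≤ a) (hb : 0 ≤ b) (hp : 0 ≤ p)
    (h : a ≤ 2 * b * p) : a ≤ min a b * (1 + 2 * p) := by
  rcases le_total a b with hab | hba
  · rw [min_eq_left hab]; nlinarith
  · rw [min_eq_right hba]; nlinarith

section SizeBiased

variable {Ω : Type*} [MeasurableSpace Ω] {P : Measure Ω} {a b p : Ω → ℝ}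

theorem setIntegral_le_three_mul_integral_min (ha : Measurable a) (hb : Measurable b)
    (hp : Measurable p) (ha_nonneg : 0 ≤ a) (hb_nonneg : 0 ≤ b) (hp_nonneg : 0 ≤ p)
    (ha_int : Integrable a P) (hp_int : Integrable p P) (hp_mean : ∫ ω, p ω ∂P = 1)
    (hind : IndepFun (fun ω => min (a ω) (b ω)) p P) :
    ∫ ω in {ω | a ω ≤ 2 * b ω * p ω}, a ω ∂P ≤ 3 * ∫ ω, min (a ω) (b ω) ∂P := by
  have hs : MeasurableSet {ω | a ω ≤ 2 * b ω * p ω} :=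
    measurableSet_le ha ((hb.const_mul 2).mul hp)
  have hmin_int : Integrable (fun ω => min (a ω) (b ω)) P :=
    ha_int.mono' (ha.min hb).aestronglyMeasurable <| ae_of_all _ fun ω => by
      rw [Real.norm_of_nonneg (le_min (ha_nonneg ω) (hb_nonneg ω))]
      exact min_le_left _ _
  have hprod_int : Integrable (fun ω => min (a ω) (b ω) * p ω) P :=
    hind.integrable_mul hmin_int hp_int
  have hpointwise : ∀ ω, {ω | a ω ≤ 2 * b ω * p ω}.indicator a ω
      ≤ min (a ω) (b ω) + 2 * (min (a ω) (b ω) * p ω) := by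
    intro ω
    by_cases hω : ω ∈ {ω | a ω ≤ 2 * b ω * p ω}
    · rw [Set.indicator_of_mem hω]
      linarith [le_min_mul_one_add_two_mul (ha_nonneg ω) (hb_nonneg ω) (hp_nonneg ω) hω]
    · rw [Set.indicator_of_notMem hω]
      have hmin : 0 ≤ min (a ω) (b ω) := le_min (ha_nonneg ω) (hb_nonneg ω)
      have hpω : 0 ≤ p ω := hp_nonneg ω
      positivity
  calc ∫ ω in {ω | a ω ≤ 2 * b ω * p ω}, a ω ∂P
      = ∫ ω, {ω | a ω ≤ 2 * b ω * p ω}.indicator a ω ∂P := (integral_indicator hs).symm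
    _ ≤ ∫ ω, min (a ω) (b ω) + 2 * (min (a ω) (b ω) * p ω) ∂P :=
        integral_mono (ha_int.indicator hs) (hmin_int.add (hprod_int.const_mul 2)) hpointwise
    _ = 3 * ∫ ω, min (a ω) (b ω) ∂P := by
        rw [integral_add hmin_int (hprod_int.const_mul 2), integral_const_mul,
          hind.integral_fun_mul_eq_mul_integral (ha.min hb).aestronglyMeasurable
            hp.aestronglyMeasurable, hp_mean]
        ring

end SizeBiased

section GaussianExponentialMartingale

variable {Ω ι : Type*} [MeasurableSpace Ω] {P : Measure Ω} {Z : ι → Ω → ℝ} {v : ℝ≥0}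

theorem mgf_sum_of_gaussianReal (hind : iIndepFun Z P) (hmeas : ∀ u, Measurable (Z u))
    (hlaw : ∀ u, P.map (Z u) = gaussianReal 0 v) (s : Finset ι) (t : ℝ) :
    mgf (∑ u ∈ s, Z u) P t = rexp (s.card * (v * t ^ 2 / 2)) := by
  rw [hind.mgf_sum hmeas, Finset.prod_congr rfl fun u _ => mgf_gaussianReal (hlaw u) t,
    Finset.prod_const, ← Real.exp_nat_mul, zero_mul, zero_add]

theorem integral_exp_mul_sum_sub_eq_one (hind : iIndepFun Z P) (hmeas : ∀ u, Measurable (Z u))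
    (hlaw : ∀ u, P.map (Z u) = gaussianReal 0 v) (s : Finset ι) (t : ℝ) :
    ∫ ω, rexp (t * ∑ u ∈ s, Z u ω - s.card * (v * t ^ 2 / 2)) ∂P = 1 := by
  simp_rw [Real.exp_sub, integral_div]
  have := mgf_sum_of_gaussianReal hind hmeas hlaw s t
  simp only [mgf, Finset.sum_apply] at this
  rw [this, div_self (Real.exp_pos _).ne']

theorem integrable_exp_mul_sum_sub (hind : iIndepFun Z P) (hmeas : ∀ u, Measurable (Z u))
    (hlaw : ∀ u, P.map (Z u) = gaussianReal 0 v) (s : Finset ι) (t c : ℝ) :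
    Integrable (fun ω => rexp (t * ∑ u ∈ s, Z u ω - c)) P := by
  have := hind.isProbabilityMeasure
  have hint : ∀ u ∈ s, Integrable (fun ω => rexp (t * Z u ω)) P := fun u _ => by
    rw [← mgf_pos_iff, mgf_gaussianReal (hlaw u)]
    exact Real.exp_pos _
  simp_rw [Real.exp_sub]
  simpa only [Finset.sum_apply] using (hind.integrable_exp_mul_sum hmeas hint).div_const _

end GaussianExponentialMartingale

theorem size_biased_event_bound_min_general {Ω : Type*} [MeasurableSpace Ω]
    (P : Measure Ω) [IsProbabilityMeasure P]
    (a0 : Ω → ℝ) (ap : ℕ → Ω → ℝ) (Z : ℕ → Ω → ℝ)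
    (ha0meas : Measurable a0) (hapmeas : ∀ i, Measurable (ap i))
    (hZmeas : ∀ u, Measurable (Z u))
    (hindep : iIndepFun
      (Sum.elim (fun _ : Unit => a0) (Sum.elim ap Z)) P)
    (ha0range : ∀ ω, a0 ω ∈ Set.Icc (0 : ℝ) 1)
    (haprange : ∀ i ω, ap i ω ∈ Set.Icc (0 : ℝ) 1)
    (q : ℝ) (hq : 0 < q)
    (hZdist : ∀ u, P.map (Z u) = gaussianReal 0 1)
    (Δ : ℝ) (i : ℕ) :
    q⁻¹ * ∫ ω in {ω | a0 ω ≤ 2 * ap i ω *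
        Real.exp (Δ * (∑ u ∈ Finset.range i, Z u ω) - (i : ℝ) * Δ ^ 2 / 2)}, a0 ω ∂P
      ≤ 3 * (q⁻¹ * ∫ ω, min (a0 ω) (ap i ω) ∂P) := by
  set f := Sum.elim (fun _ : Unit => a0) (Sum.elim ap Z)
  have hf_meas : ∀ j, Measurable (f j) := by
    rintro (_ | j | j)
    exacts [ha0meas, hapmeas j, hZmeas j]
  have hZ_indep : iIndepFun Z P :=
    (hindep.precomp (g := Sum.inr ∘ Sum.inr) (Sum.inr_injective.comp Sum.inr_injective) :)
  have hp_mean := integral_exp_mul_sum_sub_eq_one (v := 1) hZ_indep hZmeas hZdist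
    (Finset.range i) Δ
  simp only [Finset.card_range, NNReal.coe_one, one_mul, ← mul_div_assoc] at hp_mean
  have hind : IndepFun (fun ω => min (a0 ω) (ap i ω))
      (fun ω => Real.exp (Δ * (∑ u ∈ Finset.range i, Z u ω) - (i : ℝ) * Δ ^ 2 / 2)) P := by
    refine hindep.indepFun_of_measurable_iSup hf_meas
      (S := {Sum.inl (), Sum.inr (Sum.inl i)}) (T := Set.range (Sum.inr ∘ Sum.inr)) ?_ ?_ ?_
    · simp [Set.disjoint_left]
    · exact (measurable_iSup_comap_of_mem (f := f) (j := .inl ()) (by simp)).min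
        (measurable_iSup_comap_of_mem (f := f) (j := .inr (.inl i)) (by simp))
    · exact ((Finset.measurable_sum _ fun u _ => measurable_iSup_comap_of_mem (f := f)
        (Set.mem_range_self u)).const_mul Δ |>.sub_const _).exp
  have ha0_int : Integrable a0 P := .of_bound ha0meas.aestronglyMeasurable 1 <|
    ae_of_all _ fun ω => by rw [Real.norm_of_nonneg (ha0range ω).1]; exact (ha0range ω).2
  have hbound := setIntegral_le_three_mul_integral_min ha0meas (hapmeas i)
    (((Finset.measurable_sum _ fun u _ => hZmeas u).const_mul Δ).sub_const _).exp
    (fun ω => (ha0range ω).1) (fun ω => (haprange i ω).1) (fun ω => (Real.exp_pos _).le)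
    ha0_int (integrable_exp_mul_sum_sub hZ_indep hZmeas hZdist _ Δ _) hp_mean hind
  rw [mul_left_comm]
  exact mul_le_mul_of_nonneg_left hbound (inv_nonneg.2 hq.le)

/-- With the same setup as STATEMENT 15 (`a₀`, `(a⁺(i))` i.i.d. `G_q` on
`[0,1]` with mean `q > 0`, independent of i.i.d. standard normals and `Δ ≠ 0`, and
`p(i) = exp(Δ S⁺(i) − iΔ²/2)` with `E p(i) = 1`), for every `i ≥ 1`:
`q⁻¹ E[a₀ 1_{a₀ ≤ 2 a⁺(i) p(i)}] ≤ 3 q⁻¹ E[min(a₀, a⁺(i))]`. -/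
theorem size_biased_event_bound_min {Ω : Type*} [MeasurableSpace Ω]
    (P : Measure Ω) [IsProbabilityMeasure P]
    (a0 : Ω → ℝ) (ap : ℕ → Ω → ℝ) (Z : ℕ → Ω → ℝ)
    (ha0meas : Measurable a0) (hapmeas : ∀ i, Measurable (ap i))
    (hZmeas : ∀ u, Measurable (Z u))
    (hindep : iIndepFun
      (Sum.elim (fun _ : Unit => a0) (Sum.elim ap Z)) P)
    (ha0range : ∀ ω, a0 ω ∈ Set.Icc (0 : ℝ) 1)
    (haprange : ∀ i ω, ap i ω ∈ Set.Icc (0 : ℝ) 1)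
    (hiid : ∀ i, P.map (ap i) = P.map a0)
    (q : ℝ) (hq : 0 < q) (hmean : ∫ ω, a0 ω ∂P = q)
    (hZdist : ∀ u, P.map (Z u) = gaussianReal 0 1)
    (Δ : ℝ) (hΔ : Δ ≠ 0) (i : ℕ) (hi : 1 ≤ i) :
    q⁻¹ * ∫ ω in {ω | a0 ω ≤ 2 * ap i ω *
        Real.exp (Δ * (∑ u ∈ Finset.range i, Z u ω) - (i : ℝ) * Δ ^ 2 / 2)}, a0 ω ∂P
      ≤ 3 * (q⁻¹ * ∫ ω, min (a0 ω) (ap i ω) ∂P) :=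
  size_biased_event_bound_min_general P a0 ap Z ha0meas hapmeas hZmeas hindep ha0range haprange q hq
    hZdist Δ i
end
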